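/- Let C be a category with covers and suppose given morphisms f : X → Y, g : X → Z, h : Y → Z in sC with h ∘ f = g, where both g and h are n-stacks. Then f is an isomorphism of simplicial objects if and only if f induces an isomorphism on n-skeleta, i.e. f_k : X_k → Y_k is an isomorphism for all k ≤ n. -/

import Mathlib

open CategoryTheory CategoryTheory.Limits Opposite

universe v u

/-- A *category with covers*: a (locally small) category `C` together with a distinguished
subcategory of morphisms, called *covers*, satisfying the axioms of the paper:
(i) there is a terminal object and every map to it is a cover;
(ii) pullbacks of covers along arbitrary morphisms exist and are covers;
(iii) if `f` and `f ≫ g` are covers then so is `g`;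
(iv) every cover is an effective epimorphism, i.e. `X ×_Y X ⇉ X → Y` is a coequalizer. -/
structure CoversOn (C : Type u) [Category.{v} C] where
  /-- the distinguished class of covers -/
  isCover : ∀ ⦃X Y : C⦄, (X ⟶ Y) → Prop
  /-- identities are covers (covers form a subcategory) -/
  isCover_id : ∀ X : C, isCover (𝟙 X)
  /-- covers are closed under composition (covers form a subcategory) -/
  isCover_comp : ∀ {X Y Z : C} {f : X ⟶ Y} {g : Y ⟶ Z}, isCover f → isCover g → isCover (f ≫ g)
  /-- axiom (i): `C` has a terminal object -/
  hasTerminal : HasTerminal C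
  /-- axiom (i): every morphism to a terminal object is a cover -/
  isCover_toTerminal : ∀ {T : C} (hT : IsTerminal T) (X : C), isCover (hT.from X)
  /-- axiom (ii): pullbacks of covers along arbitrary morphisms exist -/
  hasPullback_of_isCover : ∀ {X Y Z : C} (f : X ⟶ Z) {g : Y ⟶ Z}, isCover g → HasPullback f g
  /-- axiom (ii): pullbacks of covers are covers -/
  isCover_of_isPullback : ∀ {P X Y Z : C} {fst : P ⟶ X} {snd : P ⟶ Y} {f : X ⟶ Z} {g : Y ⟶ Z},
    IsPullback fst snd f g → isCover g → isCover fst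
  /-- axiom (iii): right cancellation -/
  isCover_of_comp : ∀ {X Y Z : C} {f : X ⟶ Y} {g : Y ⟶ Z}, isCover f → isCover (f ≫ g) → isCover g
  /-- axiom (iv): covers are effective epimorphisms: for any kernel pair `p₁, p₂ : X ×_Y X ⇉ X`
  of a cover `f : X ⟶ Y`, the fork `X ×_Y X ⇉ X → Y` is a coequalizer -/
  isCoequalizer_of_isCover : ∀ {X Y : C} {f : X ⟶ Y}, isCover f →
    ∀ {P : C} {p₁ p₂ : P ⟶ X} (h : IsPullback p₁ p₂ f f),
      Nonempty (IsColimit (Cofork.ofπ f h.w))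

open Simplicial

namespace CatCov

variable {C : Type u} [Category.{v} C]

/-- The concrete pullback presheaf `F ×_H G` of two presheaf morphisms `α : F ⟶ H`, `β : G ⟶ H`. -/
@[simps]
def cpb {F G H : Cᵒᵖ ⥤ Type v} (α : F ⟶ H) (β : G ⟶ H) : Cᵒᵖ ⥤ Type v where
  obj U := { p : F.obj U × G.obj U // α.app U p.1 = β.app U p.2 }
  map {U V} u := TypeCat.ofHom fun p => ⟨(F.map u p.1.1, G.map u p.1.2), by
    dsimp
    rw [FunctorToTypes.naturality, FunctorToTypes.naturality]
    exact congrArg (H.map u) p.2⟩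
  map_id U := by
    ext p <;> dsimp <;> simp
  map_comp {U V W} u v := by
    ext p <;> dsimp <;> simp

/-- First projection of the concrete pullback presheaf. -/
@[simps]
def cpbFst {F G H : Cᵒᵖ ⥤ Type v} (α : F ⟶ H) (β : G ⟶ H) : cpb α β ⟶ F where
  app U := TypeCat.ofHom fun p => p.1.1

/-- Second projection of the concrete pullback presheaf. -/
@[simps]
def cpbSnd {F G H : Cᵒᵖ ⥤ Type v} (α : F ⟶ H) (β : G ⟶ H) : cpb α β ⟶ G where
  app U := TypeCat.ofHom fun p => p.1.2

/-- The universal map into the concrete pullback presheaf. -/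
@[simps]
def cpbLift {E F G H : Cᵒᵖ ⥤ Type v} {α : F ⟶ H} {β : G ⟶ H}
    (p : E ⟶ F) (q : E ⟶ G) (w : p ≫ α = q ≫ β) : E ⟶ cpb α β where
  app U := TypeCat.ofHom fun x => ⟨(p.app U x, q.app U x), types_congr_hom (NatTrans.congr_app w U) x⟩
  naturality {U V} u := by
    ext x
    apply Subtype.ext
    apply Prod.ext <;> dsimp
    exacts [NatTrans.naturality_apply p u x, NatTrans.naturality_apply q u x]

/-- Functoriality of the concrete pullback presheaf in the defining cospan. -/
@[simps]
def cpbMap {F G H F' G' H' : Cᵒᵖ ⥤ Type v} {α : F ⟶ H} {β : G ⟶ H}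
    {α' : F' ⟶ H'} {β' : G' ⟶ H'} (tF : F ⟶ F') (tG : G ⟶ G') (tH : H ⟶ H')
    (hα : α ≫ tH = tF ≫ α') (hβ : β ≫ tH = tG ≫ β') : cpb α β ⟶ cpb α' β' where
  app U := TypeCat.ofHom fun p => ⟨(tF.app U p.1.1, tG.app U p.1.2), by
    have h1 := types_congr_hom (NatTrans.congr_app hα U) p.1.1
    have h2 := types_congr_hom (NatTrans.congr_app hβ U) p.1.2
    dsimp at h1 h2 ⊢
    rw [← h1, ← h2]
    exact congrArg (tH.app U) p.2⟩
  naturality {U V} u := by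
    ext p
    apply Subtype.ext
    apply Prod.ext <;> dsimp
    exacts [NatTrans.naturality_apply tF u p.1.1, NatTrans.naturality_apply tG u p.1.2]

/-- For a simplicial presheaf `F` and a simplicial set `K`, the presheaf `hom(K, F)` of simplicial
maps from `K` into (the `U`-points of) `F`; concretely, a `U`-point is a compatible family
assigning to each simplex of `K` a `U`-point of the corresponding level of `F`. -/
@[simps]
def sHom (K : SSet.{v}) (F : SimplicialObject (Cᵒᵖ ⥤ Type v)) : Cᵒᵖ ⥤ Type v where
  obj U := { ξ : ∀ (j : SimplexCategoryᵒᵖ), K.obj j → (F.obj j).obj U //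
      ∀ (j j' : SimplexCategoryᵒᵖ) (β : j ⟶ j') (a : K.obj j),
        ξ j' (K.map β a) = (F.map β).app U (ξ j a) }
  map {U V} u := TypeCat.ofHom fun ξ => ⟨fun j a => (F.obj j).map u (ξ.1 j a), by
    intro j j' β a
    dsimp only
    rw [ξ.2 j j' β a]
    exact (NatTrans.naturality_apply (F.map β) u (ξ.1 j a)).symm⟩
  map_id U := by
    ext ξ j a
    simp
  map_comp {U V W} u v := by
    ext ξ j a
    simp

/-- `hom(K, -)` is covariantly functorial in the simplicial presheaf. -/
@[simps]
def sHomMap (K : SSet.{v}) {F G : SimplicialObject (Cᵒᵖ ⥤ Type v)} (φ : F ⟶ G) :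
    sHom K F ⟶ sHom K G where
  app U := TypeCat.ofHom fun ξ => ⟨fun j a => (φ.app j).app U (ξ.1 j a), by
    intro j j' β a
    dsimp only
    rw [ξ.2 j j' β a]
    exact types_congr_hom (congrArg (fun (t : F.obj j ⟶ G.obj j') => t.app U) (φ.naturality β)) (ξ.1 j a)⟩
  naturality {U V} u := by
    ext ξ
    apply Subtype.ext
    funext j a
    dsimp
    exact NatTrans.naturality_apply (φ.app j) u (ξ.1 j a)

/-- `hom(-, F)` is contravariantly functorial in the simplicial set. -/
@[simps]
def sHomRes {K L : SSet.{v}} (i : K ⟶ L) (F : SimplicialObject (Cᵒᵖ ⥤ Type v)) :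
    sHom L F ⟶ sHom K F where
  app U := TypeCat.ofHom fun ξ => ⟨fun j a => ξ.1 j (i.app j a), by
    intro j j' β a
    rw [← ξ.2 j j' β (i.app j a)]
    exact congrArg (ξ.1 j') (types_congr_hom (i.naturality β) a)⟩
  naturality {U V} u := by
    ext ξ
    rfl

/-- The canonical "Yoneda" map sending an `n`-simplex of a simplicial presheaf `F` to the
corresponding simplicial map `Δ[n] ⟶ F`. -/
@[simps]
def fromSimplex (F : SimplicialObject (Cᵒᵖ ⥤ Type v)) (n : SimplexCategory) :
    F.obj (op n) ⟶ sHom (SSet.stdSimplex.obj n) F where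
  app U := TypeCat.ofHom fun x => ⟨fun j α => (F.map α.down.op).app U x, by
    intro j j' β α
    show (F.map ((β.unop ≫ α.down)).op).app U x = _
    rw [op_comp, Quiver.Hom.op_unop, F.map_comp]
    rfl⟩
  naturality {U V} u := by
    ext x
    apply Subtype.ext
    funext j α
    dsimp
    exact NatTrans.naturality_apply (F.map α.down.op) u x

/-- Restriction of an `n`-simplex of `F` along a map of simplicial sets `ι : K ⟶ Δ[n]`. -/
def restrictAlong {K : SSet.{v}} {n : SimplexCategory} (ι : K ⟶ SSet.stdSimplex.obj n)
    (F : SimplicialObject (Cᵒᵖ ⥤ Type v)) : F.obj (op n) ⟶ sHom K F :=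
  fromSimplex F n ≫ sHomRes ι F

lemma restrictAlong_natural {K : SSet.{v}} {n : SimplexCategory}
    (ι : K ⟶ SSet.stdSimplex.obj n) {F G : SimplicialObject (Cᵒᵖ ⥤ Type v)} (φ : F ⟶ G) :
    restrictAlong ι F ≫ sHomMap K φ = φ.app (op n) ≫ restrictAlong ι G := by
  apply NatTrans.ext
  funext U
  ext x
  apply Subtype.ext
  funext j a
  dsimp [restrictAlong]
  exact types_congr_hom (congrArg (fun (t : F.obj (op n) ⟶ G.obj j) => t.app U)
    (φ.naturality (ι.app j a).down.op)) x

/-- For `ι : K ⟶ Δ[n]` and `φ : F ⟶ G`, the relative object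
`(K ↪ Δ[n])(φ) := hom(K, F) ×_{hom(K, G)} G_n`. -/
def relObj {K : SSet.{v}} {n : SimplexCategory} (ι : K ⟶ SSet.stdSimplex.obj n)
    {F G : SimplicialObject (Cᵒᵖ ⥤ Type v)} (φ : F ⟶ G) : Cᵒᵖ ⥤ Type v :=
  cpb (sHomMap K φ) (restrictAlong ι G)

/-- The canonical comparison map `F_n ⟶ hom(K, F) ×_{hom(K, G)} G_n`. -/
def relMap {K : SSet.{v}} {n : SimplexCategory} (ι : K ⟶ SSet.stdSimplex.obj n)
    {F G : SimplicialObject (Cᵒᵖ ⥤ Type v)} (φ : F ⟶ G) : F.obj (op n) ⟶ relObj ι φ :=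
  cpbLift (restrictAlong ι F) (φ.app (op n)) (restrictAlong_natural ι φ)

/-- `RepCover cov w` says: the presheaves `F` and `G` are representable, and, under (a choice of)
representing isomorphisms, the map of presheaves `w : F ⟶ G` corresponds to a cover in `C`.
(Covers are stable under pre- and post-composition with isomorphisms, so this does not depend on the
choice of representation.) -/
def RepCover (cov : CoversOn C) {F G : Cᵒᵖ ⥤ Type v} (w : F ⟶ G) : Prop :=
  ∃ (A B : C) (g : A ⟶ B) (eA : yoneda.obj A ≅ F) (eB : yoneda.obj B ≅ G),
    cov.isCover g ∧ eA.hom ≫ w = yoneda.map g ≫ eB.hom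

/-- A simplicial object of `C`, regarded as a simplicial presheaf via the Yoneda embedding. -/
abbrev ev (X : SimplicialObject C) : SimplicialObject (Cᵒᵖ ⥤ Type v) :=
  X ⋙ yoneda

/-- A morphism of simplicial objects of `C`, regarded as a morphism of simplicial presheaves. -/
abbrev evMap {X Y : SimplicialObject C} (f : X ⟶ Y) : ev X ⟶ ev Y :=
  Functor.whiskerRight f yoneda

/-- The relative horn object `Λⁿ_i(φ) := Λⁿ_i F ×_{Λⁿ_i G} G_n`. -/
abbrev hornObj (n : ℕ) (i : Fin (n + 1)) {F G : SimplicialObject (Cᵒᵖ ⥤ Type v)} (φ : F ⟶ G) :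
    Cᵒᵖ ⥤ Type v :=
  relObj (SSet.horn n i).ι φ

/-- The relative horn-filling map `λⁿ_i(φ) : F_n ⟶ Λⁿ_i(φ)`. -/
abbrev hornMap (n : ℕ) (i : Fin (n + 1)) {F G : SimplicialObject (Cᵒᵖ ⥤ Type v)} (φ : F ⟶ G) :
    F.obj (op (SimplexCategory.mk n)) ⟶ hornObj n i φ :=
  relMap (SSet.horn n i).ι φ

/-- The relative matching object `Mₙ(φ) := Mₙ F ×_{Mₙ G} G_n`. -/
abbrev matchObj (n : ℕ) {F G : SimplicialObject (Cᵒᵖ ⥤ Type v)} (φ : F ⟶ G) :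
    Cᵒᵖ ⥤ Type v :=
  relObj (SSet.boundary n).ι φ

/-- The relative boundary-filling map `μₙ(φ) : F_n ⟶ Mₙ(φ)`. -/
abbrev matchMap (n : ℕ) {F G : SimplicialObject (Cᵒᵖ ⥤ Type v)} (φ : F ⟶ G) :
    F.obj (op (SimplexCategory.mk n)) ⟶ matchObj n φ :=
  relMap (SSet.boundary n).ι φ

/-- A morphism of simplicial presheaves is a *Kan fibration* (relative to the covers on `C`) if,
for all `n ≥ 1` and all `0 ≤ i ≤ n`, the relative horn object `Λⁿ_i(φ)` is representable and the
horn-filling map `λⁿ_i(φ)` is (represented by) a cover. -/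
def IsKanFibration (cov : CoversOn C) {F G : SimplicialObject (Cᵒᵖ ⥤ Type v)} (φ : F ⟶ G) :
    Prop :=
  ∀ (n : ℕ) (i : Fin (n + 2)), RepCover cov (hornMap (n + 1) i φ)

/-- A morphism of simplicial presheaves is an *`N`-stack* if it is a Kan fibration and the
horn-filling maps `λᵏ_i(φ)` are isomorphisms for all `k > N`. -/
def IsStack (cov : CoversOn C) (N : ℕ) {F G : SimplicialObject (Cᵒᵖ ⥤ Type v)} (φ : F ⟶ G) :
    Prop :=
  IsKanFibration cov φ ∧
    ∀ (k : ℕ) (i : Fin (k + 2)), N < k + 1 → IsIso (hornMap (k + 1) i φ)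

end CatCov

namespace Stmt12Aux

/-- the horn condition on a morphism to `[d+1]` -/
abbrev cond {d : ℕ} (i : Fin (d + 2)) {j : SimplexCategory} (α : j ⟶ SimplexCategory.mk (d+1)) :
    Prop :=
  Set.range α.toOrderHom ∪ {i} ≠ Set.univ

variable {d : ℕ} {i : Fin (d + 2)}

/-- build a horn simplex from a morphism with the range condition -/
def hs {s : SimplexCategory} (ι : s ⟶ SimplexCategory.mk (d+1)) (h : cond i ι) :
    ((SSet.horn.{v} (d+1) i).toSSet).obj (op s) :=
  ⟨ULift.up ι, h⟩

lemma hs_map {j s : SimplexCategory} (σ : j ⟶ s) (ι : s ⟶ SimplexCategory.mk (d+1))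
    (h : cond i ι) (a : ((SSet.horn.{v} (d+1) i).toSSet).obj (op j)) (ha : a.1.down = σ ≫ ι) :
    ((SSet.horn.{v} (d+1) i).toSSet).map σ.op (hs ι h) = a := by
  apply Subtype.ext
  apply ULift.ext
  exact ha.symm

lemma range_cond_comp {j s : SimplexCategory} (σ : j ⟶ s) [Epi σ]
    (ι : s ⟶ SimplexCategory.mk (d+1)) (h : cond i (σ ≫ ι)) : cond i ι := by
  intro hc
  apply h
  have hσ : Function.Surjective σ.toOrderHom :=
    SimplexCategory.epi_iff_surjective.mp inferInstance
  have : Set.range (σ ≫ ι).toOrderHom = Set.range ι.toOrderHom := by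
    have h2 : ⇑(σ ≫ ι).toOrderHom = ⇑ι.toOrderHom ∘ ⇑σ.toOrderHom := rfl
    rw [h2, Set.range_comp, Set.range_eq_univ.mpr hσ, Set.image_univ]
  rw [this, hc]

lemma range_cond_comp' {j s : SimplexCategory} (μ : j ⟶ s)
    (ι : s ⟶ SimplexCategory.mk (d+1)) (h : cond i ι) : cond i (μ ≫ ι) := by
  intro hc
  apply h
  rw [Set.eq_univ_iff_forall] at hc ⊢
  intro y
  rcases hc y with hy | hy
  · left
    obtain ⟨x, hx⟩ := hy
    exact ⟨μ.toOrderHom x, hx⟩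
  · right; exact hy

lemma len_le_of_horn_mono {s : SimplexCategory} (ι : s ⟶ SimplexCategory.mk (d+1)) [Mono ι]
    (h : cond i ι) : s.len ≤ d := by
  have hinj : Function.Injective ι.toOrderHom :=
    SimplexCategory.mono_iff_injective.mp inferInstance
  have hex : ∃ y, y ∉ Set.range ι.toOrderHom ∪ {i} := by
    by_contra hc
    push_neg at hc
    exact h (Set.eq_univ_iff_forall.mpr hc)
  obtain ⟨y, hy⟩ := hex
  have hy' : ∀ x, ι.toOrderHom x ≠ y := fun x hx => hy (Or.inl ⟨x, hx⟩)
  have hcard := Fintype.card_lt_of_injective_of_notMem _ hinj (b := y)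
    (by rintro ⟨x, hx⟩; exact hy' x hx)
  simp [SimplexCategory.len_mk] at hcard
  omega

/-- uniqueness of epi-mono factorizations in `SimplexCategory` -/
lemma factor_unique {j s s' t : SimplexCategory} (σ : j ⟶ s) (ι : s ⟶ t)
    (σ' : j ⟶ s') (ι' : s' ⟶ t) [Epi σ] [Mono ι] [Epi σ'] [Mono ι']
    (w : σ ≫ ι = σ' ≫ ι') :
    ∃ e : s = s', ι = eqToHom e ≫ ι' ∧ σ ≫ eqToHom e = σ' := by
  set φ := σ ≫ ι with hφ
  have E1 : image φ = s := SimplexCategory.image_eq rfl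
  have E2 : image φ = s' := SimplexCategory.image_eq w.symm
  have I1 : image.ι φ = eqToHom E1 ≫ ι := by
    haveI : Epi (σ ≫ eqToHom E1.symm) := epi_comp _ _
    exact SimplexCategory.image_ι_eq (e := σ ≫ eqToHom E1.symm) (by simp [hφ])
  have I2 : image.ι φ = eqToHom E2 ≫ ι' := by
    haveI : Epi (σ' ≫ eqToHom E2.symm) := epi_comp _ _
    exact SimplexCategory.image_ι_eq (e := σ' ≫ eqToHom E2.symm) (by simp [w])
  have hι : ι = eqToHom (E1.symm.trans E2) ≫ ι' := by
    have h12 : eqToHom E1 ≫ ι = eqToHom E2 ≫ ι' := I1.symm.trans I2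
    calc ι = eqToHom E1.symm ≫ (eqToHom E1 ≫ ι) := by simp
    _ = eqToHom E1.symm ≫ (eqToHom E2 ≫ ι') := by rw [h12]
    _ = eqToHom (E1.symm.trans E2) ≫ ι' := by simp
  refine ⟨E1.symm.trans E2, hι, ?_⟩
  rw [← cancel_mono ι', Category.assoc, ← hι]
  exact hφ.symm.trans w

section Val

variable {C : Type u} [Category.{v} C]
variable {F G : SimplicialObject (Cᵒᵖ ⥤ Type v)}

/-- candidate inverse values -/
def val (d : ℕ) (i : Fin (d + 2)) (F : SimplicialObject (Cᵒᵖ ⥤ Type v)) (U : Cᵒᵖ)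
    (finv : ∀ s : SimplexCategory, s.len ≤ d → ((G.obj (op s)).obj U → (F.obj (op s)).obj U))
    (η : (CatCov.sHom ((SSet.horn.{v} (d+1) i).toSSet) G).obj U)
    {j s : SimplexCategory} (σ : j ⟶ s) (ι : s ⟶ SimplexCategory.mk (d+1))
    (hι : cond i ι) (hlen : s.len ≤ d) : (F.obj (op j)).obj U :=
  (F.map σ.op).app U (finv s hlen (η.1 (op s) (hs ι hι)))

lemma val_transport (d : ℕ) (i : Fin (d + 2)) (U : Cᵒᵖ)
    (finv : ∀ s : SimplexCategory, s.len ≤ d → ((G.obj (op s)).obj U → (F.obj (op s)).obj U))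
    (η : (CatCov.sHom ((SSet.horn.{v} (d+1) i).toSSet) G).obj U)
    {j s s' : SimplexCategory} (σ : j ⟶ s) (ι : s ⟶ SimplexCategory.mk (d+1))
    (σ' : j ⟶ s') (ι' : s' ⟶ SimplexCategory.mk (d+1))
    (hι : cond i ι) (hlen : s.len ≤ d) (hι' : cond i ι') (hlen' : s'.len ≤ d)
    (e : s = s') (h1 : ι = eqToHom e ≫ ι') (h2 : σ ≫ eqToHom e = σ') :
    val d i F U finv η σ ι hι hlen = val d i F U finv η σ' ι' hι' hlen' := by
  subst e
  simp only [eqToHom_refl, Category.id_comp] at h1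
  simp only [eqToHom_refl, Category.comp_id] at h2
  subst h1
  subst h2
  rfl

lemma val_fac (d : ℕ) (i : Fin (d + 2)) (U : Cᵒᵖ)
    (finv : ∀ s : SimplexCategory, s.len ≤ d → ((G.obj (op s)).obj U → (F.obj (op s)).obj U))
    (η : (CatCov.sHom ((SSet.horn.{v} (d+1) i).toSSet) G).obj U)
    {j s' : SimplexCategory} (α : j ⟶ SimplexCategory.mk (d+1))
    (σ' : j ⟶ s') (ι' : s' ⟶ SimplexCategory.mk (d+1)) [Epi σ'] [Mono ι']
    (fac : σ' ≫ ι' = α)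
    (hι : cond i (image.ι α)) (hlen : (image α).len ≤ d)
    (hι' : cond i ι') (hlen' : s'.len ≤ d) :
    val d i F U finv η (factorThruImage α) (image.ι α) hι hlen
      = val d i F U finv η σ' ι' hι' hlen' := by
  obtain ⟨e, h1, h2⟩ := factor_unique (factorThruImage α) (image.ι α) σ' ι'
    (by rw [image.fac, fac])
  exact val_transport d i U finv η _ _ _ _ _ _ _ _ e h1 h2

end Val

section Val2

variable {C : Type u} [Category.{v} C]
variable {F G : SimplicialObject (Cᵒᵖ ⥤ Type v)}

lemma val_section (d : ℕ) (i : Fin (d + 2)) (φ : F ⟶ G) (U : Cᵒᵖ)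
    (finv : ∀ s : SimplexCategory, s.len ≤ d → ((G.obj (op s)).obj U → (F.obj (op s)).obj U))
    (hinv : ∀ (s : SimplexCategory) (hs : s.len ≤ d) (y : (G.obj (op s)).obj U),
      (φ.app (op s)).app U (finv s hs y) = y)
    (η : (CatCov.sHom ((SSet.horn.{v} (d+1) i).toSSet) G).obj U)
    {j : SimplexCategory} (α : j ⟶ SimplexCategory.mk (d+1)) (hα : cond i α)
    (hι : cond i (image.ι α)) (hlen : (image α).len ≤ d) :
    (φ.app (op j)).app U (val d i F U finv η (factorThruImage α) (image.ι α) hι hlen)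
      = η.1 (op j) (hs α hα) := by
  rw [val]
  have hnat := types_congr_hom (NatTrans.congr_app (φ.naturality (factorThruImage α).op) U)
    (finv (image α) hlen (η.1 (op (image α)) (hs (image.ι α) hι)))
  dsimp at hnat ⊢
  rw [hnat, hinv]
  have := η.2 (op (image α)) (op j) (factorThruImage α).op (hs (image.ι α) hι)
  rw [hs_map (factorThruImage α) (image.ι α) hι (hs α hα) (image.fac α).symm] at this
  exact this.symm

lemma val_mono_absorb (d : ℕ) (i : Fin (d + 2)) (φ : F ⟶ G) (U : Cᵒᵖ)
    (finv : ∀ s : SimplexCategory, s.len ≤ d → ((G.obj (op s)).obj U → (F.obj (op s)).obj U))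
    (hinv : ∀ (s : SimplexCategory) (hs : s.len ≤ d) (y : (G.obj (op s)).obj U),
      (φ.app (op s)).app U (finv s hs y) = y)
    (hinj : ∀ (s : SimplexCategory) (hs : s.len ≤ d),
      Function.Injective ((φ.app (op s)).app U))
    (η : (CatCov.sHom ((SSet.horn.{v} (d+1) i).toSSet) G).obj U)
    {t s : SimplexCategory} (μ : t ⟶ s) [Mono μ] (ι : s ⟶ SimplexCategory.mk (d+1))
    (hι : cond i ι) (hlen : s.len ≤ d) (hι' : cond i (μ ≫ ι)) (hlen' : t.len ≤ d) :
    (F.map μ.op).app U (finv s hlen (η.1 (op s) (hs ι hι)))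
      = finv t hlen' (η.1 (op t) (hs (μ ≫ ι) hι')) := by
  apply hinj t hlen'
  have hnat := types_congr_hom (NatTrans.congr_app (φ.naturality μ.op) U)
    (finv s hlen (η.1 (op s) (hs ι hι)))
  dsimp at hnat
  rw [hnat, hinv, hinv]
  have := η.2 (op s) (op t) μ.op (hs ι hι)
  rw [hs_map μ ι hι (hs (μ ≫ ι) hι') rfl] at this
  exact this.symm

lemma val_natural (d : ℕ) (i : Fin (d + 2)) (φ : F ⟶ G) (U : Cᵒᵖ)
    (finv : ∀ s : SimplexCategory, s.len ≤ d → ((G.obj (op s)).obj U → (F.obj (op s)).obj U))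
    (hinv : ∀ (s : SimplexCategory) (hs : s.len ≤ d) (y : (G.obj (op s)).obj U),
      (φ.app (op s)).app U (finv s hs y) = y)
    (hinj : ∀ (s : SimplexCategory) (hs : s.len ≤ d),
      Function.Injective ((φ.app (op s)).app U))
    (η : (CatCov.sHom ((SSet.horn.{v} (d+1) i).toSSet) G).obj U)
    {j j' : SimplexCategory} (β : j' ⟶ j) (α : j ⟶ SimplexCategory.mk (d+1))
    (hι : cond i (image.ι α)) (hl : (image α).len ≤ d)
    (hι₂ : cond i (image.ι (β ≫ α))) (hl₂ : (image (β ≫ α)).len ≤ d) :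
    val d i F U finv η (factorThruImage (β ≫ α)) (image.ι (β ≫ α)) hι₂ hl₂
      = (F.map β.op).app U (val d i F U finv η (factorThruImage α) (image.ι α) hι hl) := by
  -- names for the factorization of β ≫ factorThruImage α
  set σ := factorThruImage α with hσ
  set ι := image.ι α with hιdef
  set τ := factorThruImage (β ≫ σ) with hτ
  set μ := image.ι (β ≫ σ) with hμ
  have hμι : cond i (μ ≫ ι) := range_cond_comp' μ ι hι
  have hlt : (image (β ≫ σ)).len ≤ d :=
    le_trans (SimplexCategory.len_le_of_mono μ) hl
  -- right hand side
  have hrhs : (F.map β.op).app U (val d i F U finv η σ ι hι hl)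
      = val d i F U finv η τ (μ ≫ ι) hμι hlt := by
    rw [val, val]
    have hcomp : (σ.op ≫ β.op : op (image α) ⟶ op j') = ((τ ≫ μ).op) := by
      exact (congrArg Quiver.Hom.op (image.fac (β ≫ σ))).symm
    have h1 : (F.map β.op).app U ((F.map σ.op).app U
        (finv (image α) hl (η.1 (op (image α)) (hs ι hι))))
        = (F.map (σ.op ≫ β.op)).app U (finv (image α) hl (η.1 (op (image α)) (hs ι hι))) := by
      rw [F.map_comp]; rfl
    rw [h1, hcomp]
    have h2 : ((τ ≫ μ).op : op (image α) ⟶ op j') = μ.op ≫ τ.op := rfl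
    rw [h2, F.map_comp]
    dsimp
    rw [val_mono_absorb d i φ U finv hinv hinj η μ ι hι hl hμι hlt]
  rw [hrhs]
  exact val_fac d i U finv η (β ≫ α) τ (μ ≫ ι) (by rw [← Category.assoc, image.fac, Category.assoc, image.fac]) hι₂ hl₂ hμι hlt

end Val2

section Main

variable {C : Type u} [Category.{v} C]

lemma sHomMap_horn_isIso (d : ℕ) (i : Fin (d + 2))
    {F G : SimplicialObject (Cᵒᵖ ⥤ Type v)} (φ : F ⟶ G)
    (hφ : ∀ s : SimplexCategory, s.len ≤ d → IsIso (φ.app (op s))) :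
    IsIso (CatCov.sHomMap ((SSet.horn.{v} (d+1) i).toSSet) φ) := by
  have happ : ∀ U : Cᵒᵖ, IsIso ((CatCov.sHomMap ((SSet.horn.{v} (d+1) i).toSSet) φ).app U) := by
    intro U
    rw [isIso_iff_bijective]
    have bij : ∀ (s : SimplexCategory) (hsl : s.len ≤ d),
        Function.Bijective ((φ.app (op s)).app U) := by
      intro s hsl
      haveI := hφ s hsl
      exact (isIso_iff_bijective _).mp inferInstance
    have hcondι : ∀ {j : SimplexCategoryᵒᵖ} (a : ((SSet.horn.{v} (d+1) i).toSSet).obj j),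
        cond i (image.ι a.1.down) := fun a =>
      range_cond_comp (factorThruImage a.1.down) _ (by rw [image.fac]; exact a.2)
    have hlenι : ∀ {j : SimplexCategoryᵒᵖ} (a : ((SSet.horn.{v} (d+1) i).toSSet).obj j),
        (image a.1.down).len ≤ d := fun a => len_le_of_horn_mono _ (hcondι a)
    constructor
    · intro ξ ξ' hξξ
      apply Subtype.ext
      funext j a
      have ha : a = ((SSet.horn.{v} (d+1) i).toSSet).map (factorThruImage a.1.down).op
          (hs (image.ι a.1.down) (hcondι a)) :=
        (hs_map _ _ _ a (image.fac _).symm).symm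
      rw [ha, ξ.2, ξ'.2]
      have key := congrArg (fun t => t.1 (op (image a.1.down))
        (hs (image.ι a.1.down) (hcondι a))) hξξ
      exact congrArg ((F.map (factorThruImage a.1.down).op).app U) ((bij _ (hlenι a)).1 key)
    · intro η
      let finv : ∀ s : SimplexCategory, s.len ≤ d →
          ((G.obj (op s)).obj U → (F.obj (op s)).obj U) :=
        fun s hsl => ⇑(Equiv.ofBijective _ (bij s hsl)).symm
      have hinv : ∀ (s : SimplexCategory) (hsl : s.len ≤ d) (y : (G.obj (op s)).obj U),
          (φ.app (op s)).app U (finv s hsl y) = y := fun s hsl y =>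
        Equiv.apply_symm_apply (Equiv.ofBijective _ (bij s hsl)) y
      have hinj : ∀ (s : SimplexCategory) (hsl : s.len ≤ d),
          Function.Injective ((φ.app (op s)).app U) := fun s hsl => (bij s hsl).1
      refine ⟨⟨fun j a => val d i F U finv η (factorThruImage a.1.down)
        (image.ι a.1.down) (hcondι a) (hlenι a), ?_⟩, ?_⟩
      · intro j j' β a
        exact val_natural d i φ U finv hinv hinj η β.unop a.1.down
          (hcondι a) (hlenι a) (hcondι (((SSet.horn.{v} (d+1) i).toSSet).map β a))
          (hlenι (((SSet.horn.{v} (d+1) i).toSSet).map β a))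
      · apply Subtype.ext
        funext j a
        exact val_section d i φ U finv hinv η a.1.down a.2 (hcondι a) (hlenι a)
  exact NatIso.isIso_of_isIso_app _

end Main

section Glue

variable {C : Type u} [Category.{v} C]

lemma cpbMap_isIso {F G H F' G' H' : Cᵒᵖ ⥤ Type v} {α : F ⟶ H} {β : G ⟶ H}
    {α' : F' ⟶ H'} {β' : G' ⟶ H'} (tF : F ⟶ F') (tG : G ⟶ G') (tH : H ⟶ H')
    (hα : α ≫ tH = tF ≫ α') (hβ : β ≫ tH = tG ≫ β')
    [IsIso tF] [IsIso tG] [IsIso tH] :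
    IsIso (CatCov.cpbMap tF tG tH hα hβ) := by
  have happ : ∀ U, IsIso ((CatCov.cpbMap tF tG tH hα hβ).app U) := by
    intro U
    rw [isIso_iff_bijective]
    have bF : Function.Bijective (tF.app U) := (isIso_iff_bijective _).mp inferInstance
    have bG : Function.Bijective (tG.app U) := (isIso_iff_bijective _).mp inferInstance
    have bH : Function.Bijective (tH.app U) := (isIso_iff_bijective _).mp inferInstance
    constructor
    · intro p q hpq
      apply Subtype.ext
      have h1 := congrArg (fun t => t.1.1) hpq
      have h2 := congrArg (fun t => t.1.2) hpq
      exact Prod.ext (bF.1 h1) (bG.1 h2)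
    · rintro ⟨⟨x, y⟩, hxy⟩
      obtain ⟨x₀, hx₀⟩ := bF.2 x
      obtain ⟨y₀, hy₀⟩ := bG.2 y
      refine ⟨⟨(x₀, y₀), ?_⟩, ?_⟩
      · apply bH.1
        have e1 := types_congr_hom (NatTrans.congr_app hα U) x₀
        have e2 := types_congr_hom (NatTrans.congr_app hβ U) y₀
        dsimp at e1 e2 ⊢
        rw [e1, e2, hx₀, hy₀]
        exact hxy
      · apply Subtype.ext
        exact Prod.ext hx₀ hy₀
  exact NatIso.isIso_of_isIso_app _

lemma sHomMap_comp (K : SSet.{v}) {F G H : SimplicialObject (Cᵒᵖ ⥤ Type v)}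
    (φ : F ⟶ G) (ψ : G ⟶ H) :
    CatCov.sHomMap K (φ ≫ ψ) = CatCov.sHomMap K φ ≫ CatCov.sHomMap K ψ := by
  apply NatTrans.ext
  funext U
  ext ξ
  apply Subtype.ext
  rfl

/-- the comparison map `Λ(g) ⟶ Λ(h)` induced by `f` -/
def hornComparison {X Y Z : SimplicialObject C} (f : X ⟶ Y) (g : X ⟶ Z) (h : Y ⟶ Z)
    (hcomp : f ≫ h = g) (d : ℕ) (i : Fin (d + 2)) :
    CatCov.hornObj (d+1) i (CatCov.evMap g) ⟶ CatCov.hornObj (d+1) i (CatCov.evMap h) :=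
  CatCov.cpbMap (CatCov.sHomMap _ (CatCov.evMap f)) (𝟙 _) (𝟙 _)
    (by
      rw [Category.comp_id, ← sHomMap_comp]
      congr 1
      rw [← hcomp]
      exact Functor.whiskerRight_comp f h yoneda)
    (by rw [Category.comp_id, Category.id_comp])

lemma hornComparison_isIso {X Y Z : SimplicialObject C} (f : X ⟶ Y) (g : X ⟶ Z) (h : Y ⟶ Z)
    (hcomp : f ≫ h = g) (d : ℕ) (i : Fin (d + 2))
    [IsIso (CatCov.sHomMap ((SSet.horn.{v} (d+1) i).toSSet) (CatCov.evMap f))] :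
    IsIso (hornComparison f g h hcomp d i) :=
  cpbMap_isIso _ _ _ _ _

lemma horn_square {X Y Z : SimplicialObject C} (f : X ⟶ Y) (g : X ⟶ Z) (h : Y ⟶ Z)
    (hcomp : f ≫ h = g) (d : ℕ) (i : Fin (d + 2)) :
    CatCov.hornMap (d+1) i (CatCov.evMap g) ≫ hornComparison f g h hcomp d i
      = (CatCov.evMap f).app (op (SimplexCategory.mk (d+1)))
        ≫ CatCov.hornMap (d+1) i (CatCov.evMap h) := by
  have hfh : CatCov.evMap f ≫ CatCov.evMap h = CatCov.evMap g := by
    rw [← hcomp]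
    exact (Functor.whiskerRight_comp f h yoneda).symm
  apply NatTrans.ext
  funext U
  ext x
  apply Subtype.ext
  apply Prod.ext
  · exact types_congr_hom (NatTrans.congr_app (CatCov.restrictAlong_natural
      ((SSet.horn (d+1) i).ι) (CatCov.evMap f)) U) x
  · exact (types_congr_hom (NatTrans.congr_app (NatTrans.congr_app hfh
      (op (SimplexCategory.mk (d+1)))) U) x).symm

end Glue

end Stmt12Aux


open CatCov in
/-- Let `C` be a category with covers and suppose given `f : X ⟶ Y`,
`g : X ⟶ Z`, `h : Y ⟶ Z` in `sC` with `h ∘ f = g`, where both `g` and `h` are `n`-stacks.  Then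
`f` is an isomorphism of simplicial objects if and only if `f` induces an isomorphism on
`n`-skeleta, i.e. `f_k : X_k ⟶ Y_k` is an isomorphism for all `k ≤ n`. -/
theorem stmt_12 {C : Type u} [Category.{v} C] (cov : CoversOn C) (n : ℕ)
    {X Y Z : SimplicialObject C} (f : X ⟶ Y) (g : X ⟶ Z) (h : Y ⟶ Z)
    (hcomp : f ≫ h = g)
    (hg : IsStack cov n (evMap g))
    (hh : IsStack cov n (evMap h)) :
    IsIso f ↔ ∀ k : ℕ, k ≤ n → IsIso (f.app (op (SimplexCategory.mk k))) := by
  constructor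
  · intro hf k hk
    infer_instance
  · intro hskel
    have hall : ∀ k : ℕ, IsIso (f.app (op (SimplexCategory.mk k))) := by
      intro k
      induction k using Nat.strong_induction_on with
      | _ k IH =>
        rcases le_or_gt k n with hk | hk
        · exact hskel k hk
        · obtain ⟨m, rfl⟩ : ∃ m, k = m + 1 := ⟨k - 1, by omega⟩
          have hlg := hg.2 m 0 (by omega)
          have hlh := hh.2 m 0 (by omega)
          have hsh : IsIso (sHomMap ((SSet.horn.{v} (m+1) 0).toSSet) (evMap f)) := by
            apply Stmt12Aux.sHomMap_horn_isIso
            intro s hsl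
            haveI : IsIso (f.app (op (SimplexCategory.mk s.len))) := IH s.len (by omega)
            haveI : IsIso (f.app (op s)) := by
              rw [← SimplexCategory.mk_len s]
              infer_instance
            have he : (evMap f).app (op s) = yoneda.map (f.app (op s)) := rfl
            rw [he]
            infer_instance
          haveI := hsh
          haveI := hlg
          haveI := hlh
          haveI : IsIso (Stmt12Aux.hornComparison f g h hcomp m 0) :=
            Stmt12Aux.hornComparison_isIso f g h hcomp m 0
          have hsq := Stmt12Aux.horn_square f g h hcomp m 0
          have heq : (evMap f).app (op (SimplexCategory.mk (m+1)))
              = hornMap (m+1) 0 (evMap g) ≫ Stmt12Aux.hornComparison f g h hcomp m 0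
                ≫ inv (hornMap (m+1) 0 (evMap h)) := by
            rw [← Category.assoc, hsq, Category.assoc, IsIso.hom_inv_id, Category.comp_id]
          haveI : IsIso ((evMap f).app (op (SimplexCategory.mk (m+1)))) := by
            rw [heq]
            infer_instance
          haveI : IsIso (yoneda.map (f.app (op (SimplexCategory.mk (m+1))))) := by
            have he : (evMap f).app (op (SimplexCategory.mk (m+1)))
                = yoneda.map (f.app (op (SimplexCategory.mk (m+1)))) := rfl
            rw [← he]
            infer_instance
          exact isIso_of_reflects_iso (f.app (op (SimplexCategory.mk (m+1)))) yoneda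
    haveI : ∀ j : SimplexCategoryᵒᵖ, IsIso (f.app j) := by
      intro j
      have hj := hall j.unop.len
      rw [SimplexCategory.mk_len j.unop] at hj
      exact hj
    exact NatIso.isIso_of_isIso_app f
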